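/- Let ℋ be a finite-dimensional complex Hilbert space, H Hermitian with at least two distinct eigenvalues E₀ < E₁ and corresponding eigenstates |E₀⟩, |E₁⟩, and let ρ be a positive definite density operator. Suppose that for some eigenstate |E_l⟩ of H, [ρ, |E_l⟩⟨E_l|] ≠ 0. Then there exist N ∈ ℕ and a unitary U on ℋ^{⊗N} with [U†H^{(N)}U, H^{(N)}] = 0 and W(ρ^{⊗N}, H^{(N)}, U) > 0, where H^{(N)} = ∑_k I^{⊗(k-1)}⊗H⊗I^{⊗(N-k)}. -/

import Mathlib

open Matrix ComplexOrder

set_option linter.unusedSectionVars false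

/-- The operator acting as `H` on site `k` and as the identity elsewhere, on the tensor
power `ℋ^{⊗ι}` (realized as matrices indexed by `ι → n`). -/
def siteOp {n : Type*} [Fintype n] [DecidableEq n] {ι : Type*} [Fintype ι] [DecidableEq ι]
    (H : Matrix n n ℂ) (k : ι) : Matrix (ι → n) (ι → n) ℂ :=
  Matrix.of fun a b => (if ∀ j, j ≠ k → a j = b j then 1 else 0) * H (a k) (b k)

/-- The extensive Hamiltonian `H^{(ι)} = ∑_k I⊗⋯⊗H⊗⋯⊗I`. -/
noncomputable def extOp {n : Type*} [Fintype n] [DecidableEq n]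
    (H : Matrix n n ℂ) (ι : Type*) [Fintype ι] [DecidableEq ι] :
    Matrix (ι → n) (ι → n) ℂ :=
  ∑ k : ι, siteOp H k

/-- The tensor power `ρ^{⊗ι}` of a state. -/
noncomputable def tensorState {n : Type*} [Fintype n]
    (ρ : Matrix n n ℂ) (ι : Type*) [Fintype ι] : Matrix (ι → n) (ι → n) ℂ :=
  Matrix.of fun a b => ∏ s : ι, ρ (a s) (b s)


namespace Work

variable {n : Type*} [Fintype n] [DecidableEq n] {ι : Type*} [Fintype ι] [DecidableEq ι]

def pvec (c : ι → n → ℂ) : (ι → n) → ℂ := fun x => ∏ j, c j (x j)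

lemma sum_fun_prod {γ : Type*} [Fintype γ] (f : ι → γ → ℂ) :
    ∑ p : ι → γ, ∏ i, f i (p i) = ∏ i, ∑ c, f i c := by
  rw [Finset.prod_univ_sum, Fintype.piFinset_univ]

lemma dot_pvec (c d : ι → n → ℂ) :
    star (pvec c) ⬝ᵥ pvec d = ∏ j, star (c j) ⬝ᵥ d j := by
  unfold pvec dotProduct
  rw [← sum_fun_prod (f := fun j s => star (c j) s * d j s)]
  apply Finset.sum_congr rfl
  intro x _
  simp only [Pi.star_apply, star_prod, ← Finset.prod_mul_distrib]

lemma tensorState_mulVec (ρ : Matrix n n ℂ) (c : ι → n → ℂ) :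
    (tensorState ρ ι).mulVec (pvec c) = pvec (fun j => ρ.mulVec (c j)) := by
  funext x
  unfold tensorState pvec mulVec dotProduct
  simp only [Matrix.of_apply]
  rw [← sum_fun_prod (f := fun j s => ρ (x j) s * c j s)]
  exact Finset.sum_congr rfl fun y _ => by rw [← Finset.prod_mul_distrib]

lemma siteOp_mulVec_pvec (H : Matrix n n ℂ) (k : ι) (c : ι → n → ℂ) {e : ℝ}
    (hc : H.mulVec (c k) = (e : ℂ) • c k) :
    (siteOp H k).mulVec (pvec c) = (e : ℂ) • pvec c := by
  funext x
  unfold siteOp pvec mulVec dotProduct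
  simp only [Matrix.of_apply, Pi.smul_apply, smul_eq_mul]
  have step1 : ∀ y : ι → n,
      (if ∀ j, j ≠ k → x j = y j then (1:ℂ) else 0) * H (x k) (y k) * ∏ j, c j (y j)
      = ∑ s : n, if y = Function.update x k s then H (x k) s * ∏ j, c j ((Function.update x k s) j) else 0 := by
    intro y
    by_cases hy : ∀ j, j ≠ k → x j = y j
    · have hyu : y = Function.update x k (y k) := by
        funext j
        by_cases hj : j = k
        · subst hj; simp
        · simp [Function.update_of_ne hj, (hy j hj).symm]
      rw [Finset.sum_eq_single (y k)]
      · simp [if_pos hy, ← hyu]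
      · intro s _ hs
        rw [if_neg]
        intro h
        apply hs
        have := congrFun h k
        simpa using this.symm
      · simp
    · rw [if_neg hy]
      rw [Finset.sum_eq_zero]
      · ring
      intro s _
      rw [if_neg]
      intro h
      apply hy
      intro j hj
      have := congrFun h j
      simp only [Function.update_of_ne hj] at this
      exact this.symm
  rw [Finset.sum_congr rfl (fun y _ => step1 y), Finset.sum_comm]
  simp only [Finset.sum_ite_eq' Finset.univ, Finset.mem_univ, if_true]
  have hupd : ∀ s : n, ∏ j, c j (Function.update x k s j) = c k s * ∏ j ∈ Finset.univ.erase k, c j (x j) := by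
    intro s
    rw [← Finset.mul_prod_erase Finset.univ _ (Finset.mem_univ k)]
    simp only [Function.update_self]
    congr 1
    apply Finset.prod_congr rfl
    intro j hj
    rw [Function.update_of_ne (Finset.ne_of_mem_erase hj)]
  simp only [hupd]
  have hmv : ∑ s : n, H (x k) s * (c k s) = (e:ℂ) * c k (x k) := by
    have := congrFun hc (x k)
    simpa [mulVec, dotProduct] using this
  have hsplit : ∏ j, c j (x j) = c k (x k) * ∏ j ∈ Finset.univ.erase k, c j (x j) :=
    (Finset.mul_prod_erase Finset.univ _ (Finset.mem_univ k)).symm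
  rw [hsplit, ← mul_assoc, ← hmv, Finset.sum_mul]
  exact Finset.sum_congr rfl fun s _ => by ring

lemma mulVec_sum {κ : Type*} [Fintype κ] (M : κ → Matrix (ι → n) (ι → n) ℂ) (v : (ι → n) → ℂ) :
    (∑ k : κ, M k).mulVec v = ∑ k : κ, (M k).mulVec v := by
  funext x
  unfold mulVec dotProduct
  simp only [Matrix.sum_apply, Finset.sum_mul, Finset.sum_apply]
  rw [Finset.sum_comm]

lemma extOp_mulVec_pvec (H : Matrix n n ℂ) (c : ι → n → ℂ) (e : ι → ℝ)
    (hc : ∀ j, H.mulVec (c j) = (e j : ℂ) • c j) :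
    (extOp H ι).mulVec (pvec c) = ((∑ j, e j : ℝ) : ℂ) • pvec c := by
  unfold extOp
  rw [mulVec_sum]
  rw [Finset.sum_congr rfl (fun k _ => siteOp_mulVec_pvec H k c (hc k))]
  rw [← Finset.sum_smul]
  norm_cast
end Work

namespace Work
variable {m : Type*} [Fintype m] [DecidableEq m]

lemma star_dot_swap (x y : m → ℂ) : star (star x ⬝ᵥ y) = star y ⬝ᵥ x := by
  unfold dotProduct
  rw [star_sum]
  apply Finset.sum_congr rfl
  intro i _
  simp [mul_comm]

lemma herm_dot_swap {M : Matrix m m ℂ} (hM : M.IsHermitian) (x y : m → ℂ) :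
    star x ⬝ᵥ M.mulVec y = star (star y ⬝ᵥ M.mulVec x) := by
  rw [star_dot_swap, Matrix.star_mulVec, hM.eq, Matrix.dotProduct_mulVec]

lemma herm_quad_real {M : Matrix m m ℂ} (hM : M.IsHermitian) (x : m → ℂ) :
    star x ⬝ᵥ M.mulVec x = ((star x ⬝ᵥ M.mulVec x).re : ℂ) := by
  have h := herm_dot_swap hM x x
  exact (Complex.conj_eq_iff_re.mp h.symm).symm

lemma eig_orth {M : Matrix m m ℂ} (hM : M.IsHermitian) {x y : m → ℂ} {a b : ℝ}
    (hx : M.mulVec x = (a : ℂ) • x) (hy : M.mulVec y = (b : ℂ) • y) (hab : a ≠ b) :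
    star x ⬝ᵥ y = 0 := by
  have h1 : star x ⬝ᵥ M.mulVec y = (b : ℂ) * (star x ⬝ᵥ y) := by
    rw [hy, dotProduct_smul, smul_eq_mul]
  have h2 : star x ⬝ᵥ M.mulVec y = (a : ℂ) * (star x ⬝ᵥ y) := by
    rw [Matrix.dotProduct_mulVec]
    rw [show star x ᵥ* M = star (M.mulVec x) by rw [Matrix.star_mulVec, hM.eq]]
    rw [hx, star_smul, smul_dotProduct]
    simp [smul_eq_mul]
  have := h1.symm.trans h2
  have hc : ((a : ℂ) - b) * (star x ⬝ᵥ y) = 0 := by rw [sub_mul, this]; ring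
  rcases mul_eq_zero.mp hc with h | h
  · exfalso; apply hab
    have : (a:ℂ) = b := sub_eq_zero.mp h
    exact_mod_cast this
  · exact h

lemma vecMulVec_mul_vecMulVec (x y z w : m → ℂ) :
    vecMulVec x y * vecMulVec z w = (y ⬝ᵥ z) • vecMulVec x w := by
  ext i j
  simp [Matrix.mul_apply, vecMulVec_apply, dotProduct, Finset.mul_sum, Finset.sum_mul]
  apply Finset.sum_congr rfl
  intro k _
  ring

lemma mul_vecMulVec (M : Matrix m m ℂ) (x y : m → ℂ) :
    M * vecMulVec x y = vecMulVec (M.mulVec x) y := by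
  ext i j
  simp [Matrix.mul_apply, vecMulVec_apply, mulVec, dotProduct, Finset.sum_mul]
  apply Finset.sum_congr rfl
  intro k _
  ring

lemma vecMulVec_mul (M : Matrix m m ℂ) (x y : m → ℂ) :
    vecMulVec x y * M = vecMulVec x (M.vecMul y) := by
  ext i j
  simp [Matrix.mul_apply, vecMulVec_apply, vecMul, dotProduct, Finset.mul_sum]
  apply Finset.sum_congr rfl
  intro k _
  ring

lemma trace_mul_vecMulVec (M : Matrix m m ℂ) (x y : m → ℂ) :
    (M * vecMulVec x y).trace = y ⬝ᵥ M.mulVec x := by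
  rw [mul_vecMulVec]
  unfold Matrix.trace dotProduct
  simp [vecMulVec_apply, Matrix.diag]
  apply Finset.sum_congr rfl
  intro i _
  ring

lemma conjTranspose_vecMulVec (x y : m → ℂ) :
    (vecMulVec x (star y))ᴴ = vecMulVec y (star x) := by
  ext i j
  simp [conjTranspose_apply, vecMulVec_apply, mul_comm]

lemma smul_vecMulVec (c : ℂ) (x y : m → ℂ) :
    vecMulVec (c • x) y = c • vecMulVec x y := by
  ext i j
  simp [vecMulVec_apply, mul_assoc]

lemma vecMulVec_smul (c : ℂ) (x y : m → ℂ) :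
    vecMulVec x (c • y) = c • vecMulVec x y := by
  ext i j
  simp [vecMulVec_apply]
  ring

end Work
namespace Work
variable {n : Type*} [Fintype n] [DecidableEq n] {ι : Type*} [Fintype ι] [DecidableEq ι]

lemma siteOp_isHermitian {H : Matrix n n ℂ} (hH : H.IsHermitian) (k : ι) :
    (siteOp H k).IsHermitian := by
  ext a b
  simp only [conjTranspose_apply, siteOp, Matrix.of_apply]
  rw [star_mul']
  congr 1
  · have : (∀ j, j ≠ k → b j = a j) ↔ (∀ j, j ≠ k → a j = b j) :=
      ⟨fun h j hj => (h j hj).symm, fun h j hj => (h j hj).symm⟩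
    simp only [this]
    split <;> simp
  · exact congrFun (congrFun hH.eq _) _ |>.symm ▸ (hH.apply _ _)

lemma extOp_isHermitian {H : Matrix n n ℂ} (hH : H.IsHermitian) :
    (extOp H ι).IsHermitian := by
  unfold Matrix.IsHermitian extOp
  rw [Matrix.conjTranspose_sum]
  exact Finset.sum_congr rfl fun k _ => siteOp_isHermitian hH k

end Work
namespace Work
variable {n : Type*} [Fintype n] [DecidableEq n] {ι : Type*} [Fintype ι] [DecidableEq ι]

section Transport
variable {N : ℕ} (e : ι ≃ Fin N)

/-- the reindexing equivalence on configurations -/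
def cfg (e : ι ≃ Fin N) : (ι → n) ≃ (Fin N → n) := Equiv.arrowCongr e (Equiv.refl n)

lemma cfg_apply (f : ι → n) (j : Fin N) : cfg e f j = f (e.symm j) := rfl
lemma cfg_symm_apply (g : Fin N → n) (j : ι) : (cfg e).symm g j = g (e j) := rfl

lemma extOp_reindex (H : Matrix n n ℂ) :
    (Matrix.reindex (cfg (n := n) e) (cfg e)) (extOp H ι) = extOp H (Fin N) := by
  ext x y
  simp only [Matrix.reindex_apply, Matrix.submatrix_apply, extOp, Matrix.sum_apply]
  rw [← Equiv.sum_comp e (fun k => siteOp H k x y)]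
  apply Finset.sum_congr rfl
  intro k _
  simp only [siteOp, Matrix.of_apply, cfg_symm_apply]
  congr 1
  · congr 1
    have : (∀ j, j ≠ k → x (e j) = y (e j)) ↔ (∀ j', j' ≠ e k → x j' = y j') := by
      constructor
      · intro h j' hj'
        have := h (e.symm j') (fun hc => hj' (by rw [← hc]; simp))
        simpa using this
      · intro h j hj
        exact h (e j) (fun hc => hj (e.injective hc))
    simp only [this]

lemma tensorState_reindex (ρ : Matrix n n ℂ) :
    (Matrix.reindex (cfg (n := n) e) (cfg e)) (tensorState ρ ι) = tensorState ρ (Fin N) := by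
  ext x y
  simp only [Matrix.reindex_apply, Matrix.submatrix_apply, tensorState, Matrix.of_apply,
    cfg_symm_apply]
  exact Equiv.prod_comp e (fun s => ρ (x s) (y s))

lemma transport (e : ι ≃ Fin N) (H ρ : Matrix n n ℂ) (U : Matrix (ι → n) (ι → n) ℂ)
    (h1 : U ∈ Matrix.unitaryGroup (ι → n) ℂ)
    (h2 : Commute (Uᴴ * extOp H ι * U) (extOp H ι))
    (h3 : 0 < ((tensorState ρ ι * (extOp H ι - Uᴴ * extOp H ι * U)).trace).re) :
    ∃ U' : Matrix (Fin N → n) (Fin N → n) ℂ,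
      U' ∈ Matrix.unitaryGroup (Fin N → n) ℂ ∧
      Commute (U'ᴴ * extOp H (Fin N) * U') (extOp H (Fin N)) ∧
      0 < ((tensorState ρ (Fin N) * (extOp H (Fin N) - U'ᴴ * extOp H (Fin N) * U')).trace).re := by
  classical
  let Φ := Matrix.reindexAlgEquiv ℂ ℂ (cfg (n := n) e)
  have hΦ : ∀ M, Φ M = Matrix.reindex (cfg (n := n) e) (cfg e) M := fun _ => rfl
  have hΦH : ∀ M : Matrix (ι → n) (ι → n) ℂ, Φ (Mᴴ) = (Φ M)ᴴ := by
    intro M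
    simp only [hΦ, Matrix.reindex_apply, Matrix.conjTranspose_submatrix]
  refine ⟨Φ U, ?_, ?_, ?_⟩
  · rw [Matrix.mem_unitaryGroup_iff]
    rw [Matrix.mem_unitaryGroup_iff] at h1
    rw [Matrix.star_eq_conjTranspose, ← hΦH, ← _root_.map_mul]
    rw [Matrix.star_eq_conjTranspose] at h1
    rw [h1, _root_.map_one]
  · have hext : extOp H (Fin N) = Φ (extOp H ι) := (extOp_reindex e H).symm
    rw [hext, ← hΦH, ← _root_.map_mul, ← _root_.map_mul]
    unfold Commute SemiconjBy
    rw [← _root_.map_mul, ← _root_.map_mul, h2]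
  · have hext : extOp H (Fin N) = Φ (extOp H ι) := (extOp_reindex e H).symm
    have hts : tensorState ρ (Fin N) = Φ (tensorState ρ ι) := (tensorState_reindex e ρ).symm
    rw [hext, hts, ← hΦH, ← _root_.map_mul, ← _root_.map_mul, ← _root_.map_sub, ← _root_.map_mul]
    have : ∀ M : Matrix (ι → n) (ι → n) ℂ, (Φ M).trace = M.trace := by
      intro M
      simp only [hΦ, Matrix.reindex_apply]
      unfold Matrix.trace Matrix.diag
      simp only [Matrix.submatrix_apply]
      exact Equiv.sum_comp (cfg (n := n) e).symm (fun z => M z z)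
    rw [this]
    exact h3

end Transport
end Work
namespace Work
variable {n : Type*} [Fintype n] [DecidableEq n]

lemma mulVec_sumVec {ιn : Type*} [Fintype ιn] {κ : Type*} [Fintype κ]
    (M : Matrix ιn ιn ℂ) (v : κ → ιn → ℂ) :
    M.mulVec (∑ k, v k) = ∑ k, M.mulVec (v k) := by
  funext x
  unfold mulVec dotProduct
  simp only [Finset.sum_apply, Finset.mul_sum]
  rw [Finset.sum_comm]

def sgnv {m : ℕ} (s : Fin m → Bool) : ℂ := ∏ i, if s i then (-1 : ℂ) else 1

lemma sgnv_star {m : ℕ} (s : Fin m → Bool) : star (sgnv s) = sgnv s := by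
  unfold sgnv
  rw [star_prod]
  apply Finset.prod_congr rfl
  intro i _
  cases s i <;> simp

lemma sgnv_sq {m : ℕ} (s : Fin m → Bool) : sgnv s * sgnv s = 1 := by
  unfold sgnv
  rw [← Finset.prod_mul_distrib]
  apply Finset.prod_eq_one
  intro i _
  cases s i <;> norm_num

lemma sum_bool_ite {m : ℕ} (s : Fin m → Bool) (i : Fin m) (X Y : ℂ) :
    (∑ β : Bool, if s i = β then X else Y) = X + Y := by
  rw [Fintype.sum_bool]
  cases s i <;> simp [add_comm]

lemma sum_sum_prod_if (m : ℕ) (X Y : ℂ) :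
    (∑ s : Fin m → Bool, ∑ s' : Fin m → Bool, ∏ i, (if s i = s' i then X else Y))
      = 2 ^ m * (X + Y) ^ m := by
  have inner : ∀ s : Fin m → Bool,
      (∑ s' : Fin m → Bool, ∏ i, (if s i = s' i then X else Y)) = (X + Y) ^ m := by
    intro s
    rw [sum_fun_prod (f := fun i β => if s i = β then X else Y)]
    rw [Finset.prod_congr rfl (fun i _ => sum_bool_ite s i X Y), Finset.prod_const,
      Finset.card_univ, Fintype.card_fin]
  rw [Finset.sum_congr rfl (fun s _ => inner s), Finset.sum_const, Finset.card_univ]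
  rw [nsmul_eq_mul]
  congr 1
  rw [Fintype.card_fun]
  push_cast
  simp

lemma sum_sum_prod_if_sgn (m : ℕ) (X Y : ℂ) :
    (∑ s : Fin m → Bool, ∑ s' : Fin m → Bool,
        sgnv s * sgnv s' * ∏ i, (if s i = s' i then X else Y))
      = 2 ^ m * (X - Y) ^ m := by
  have inner : ∀ s : Fin m → Bool,
      (∑ s' : Fin m → Bool, sgnv s' * ∏ i, (if s i = s' i then X else Y))
        = sgnv s * (X - Y) ^ m := by
    intro s
    have h1 : ∀ s' : Fin m → Bool,
        sgnv s' * ∏ i, (if s i = s' i then X else Y)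
          = ∏ i, ((if s' i then (-1:ℂ) else 1) * (if s i = s' i then X else Y)) := by
      intro s'
      unfold sgnv
      rw [← Finset.prod_mul_distrib]
    rw [Finset.sum_congr rfl (fun s' _ => h1 s'),
      sum_fun_prod (f := fun i β => (if β then (-1:ℂ) else 1) * (if s i = β then X else Y))]
    have h2 : ∀ i, (∑ β : Bool, (if β then (-1:ℂ) else 1) * (if s i = β then X else Y))
        = (if s i then (-1:ℂ) else 1) * (X - Y) := by
      intro i
      rw [Fintype.sum_bool]
      cases s i <;> simp <;> ring
    rw [Finset.prod_congr rfl (fun i _ => h2 i), Finset.prod_mul_distrib]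
    rw [Finset.prod_const, Finset.card_univ, Fintype.card_fin]
    unfold sgnv
    rfl
  calc (∑ s : Fin m → Bool, ∑ s' : Fin m → Bool,
        sgnv s * sgnv s' * ∏ i, (if s i = s' i then X else Y))
      = ∑ s : Fin m → Bool, sgnv s *
          (∑ s' : Fin m → Bool, sgnv s' * ∏ i, (if s i = s' i then X else Y)) := by
        apply Finset.sum_congr rfl
        intro s _
        rw [Finset.mul_sum]
        apply Finset.sum_congr rfl
        intro s' _
        ring
    _ = ∑ s : Fin m → Bool, (X - Y) ^ m := by
        apply Finset.sum_congr rfl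
        intro s _
        rw [inner s, ← mul_assoc, sgnv_sq, one_mul]
    _ = 2 ^ m * (X - Y) ^ m := by
        rw [Finset.sum_const, Finset.card_univ, nsmul_eq_mul]
        congr 1
        rw [Fintype.card_fun]
        push_cast
        simp

end Work
namespace Work
variable {n : Type*} [Fintype n] [DecidableEq n]

lemma sumVec_dotProduct {ιn : Type*} [Fintype ιn] {κ : Type*} [Fintype κ]
    (v : κ → ιn → ℂ) (w : ιn → ℂ) :
    (∑ k, v k) ⬝ᵥ w = ∑ k, v k ⬝ᵥ w := by
  unfold dotProduct
  simp only [Finset.sum_apply, Finset.sum_mul]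
  rw [Finset.sum_comm]

lemma dotProduct_sumVec {ιn : Type*} [Fintype ιn] {κ : Type*} [Fintype κ]
    (v : ιn → ℂ) (w : κ → ιn → ℂ) :
    v ⬝ᵥ (∑ k, w k) = ∑ k, v ⬝ᵥ w k := by
  unfold dotProduct
  simp only [Finset.sum_apply, Finset.mul_sum]
  rw [Finset.sum_comm]

set_option maxHeartbeats 2000000 in
lemma aux_work (H ρ : Matrix n n ℂ) (hH : H.IsHermitian) (hρH : ρ.IsHermitian)
    (El Eu E0 E1 : ℝ) (vl u v0 v1 : n → ℂ)
    (hvl : H.mulVec vl = (El:ℂ) • vl) (hu : H.mulVec u = (Eu:ℂ) • u)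
    (hv0 : H.mulVec v0 = (E0:ℂ) • v0) (hv1 : H.mulVec v1 = (E1:ℂ) • v1)
    (nvl : star vl ⬝ᵥ vl = 1) (nu : star u ⬝ᵥ u = 1)
    (nv0 : star v0 ⬝ᵥ v0 = 1) (nv1 : star v1 ⬝ᵥ v1 = 1)
    (olu : star vl ⬝ᵥ u = 0) (o10 : star v1 ⬝ᵥ v0 = 0)
    (m : ℕ) :
    ∃ U : Matrix ((Fin m × Bool ⊕ Unit) → n) ((Fin m × Bool ⊕ Unit) → n) ℂ,
      U ∈ Matrix.unitaryGroup ((Fin m × Bool ⊕ Unit) → n) ℂ ∧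
      Commute (Uᴴ * extOp H (Fin m × Bool ⊕ Unit) * U) (extOp H (Fin m × Bool ⊕ Unit)) ∧
      (tensorState ρ (Fin m × Bool ⊕ Unit) *
          (extOp H (Fin m × Bool ⊕ Unit) - Uᴴ * extOp H (Fin m × Bool ⊕ Unit) * U)).trace
        = ((E1 - E0 : ℝ) : ℂ) *
          (((star vl ⬝ᵥ ρ.mulVec vl) * (star u ⬝ᵥ ρ.mulVec u)
              + (star u ⬝ᵥ ρ.mulVec vl) * star (star u ⬝ᵥ ρ.mulVec vl)) ^ m
              * (star v1 ⬝ᵥ ρ.mulVec v1)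
            - ((star vl ⬝ᵥ ρ.mulVec vl) * (star u ⬝ᵥ ρ.mulVec u)
              - (star u ⬝ᵥ ρ.mulVec vl) * star (star u ⬝ᵥ ρ.mulVec vl)) ^ m
              * (star v0 ⬝ᵥ ρ.mulVec v0)) := by
  classical
  -- basic abbreviations
  set rll := star vl ⬝ᵥ ρ.mulVec vl with hrll
  set ruu := star u ⬝ᵥ ρ.mulVec u with hruu
  set rul := star u ⬝ᵥ ρ.mulVec vl with hrul
  set q1 := star v1 ⬝ᵥ ρ.mulVec v1 with hq1
  set q0 := star v0 ⬝ᵥ ρ.mulVec v0 with hq0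
  set tc : ℂ := rul * star rul with htc
  have oul : star u ⬝ᵥ vl = 0 := by
    rw [← star_dot_swap, olu, star_zero]
  have o01 : star v0 ⬝ᵥ v1 = 0 := by
    rw [← star_dot_swap, o10, star_zero]
  have hrlu : star vl ⬝ᵥ ρ.mulVec u = star rul := by
    rw [hrul, ← herm_dot_swap hρH]
  -- the site assignments
  set gp : (Fin m → Bool) → Fin m × Bool → n → ℂ :=
    fun s p => if s p.1 = p.2 then vl else u with hgp
  set g : (n → ℂ) → (Fin m → Bool) → (Fin m × Bool ⊕ Unit) → n → ℂ :=
    fun w s => Sum.elim (gp s) (fun _ => w) with hg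
  -- split of products over the index type
  have pairSplit : ∀ f : (Fin m × Bool ⊕ Unit) → ℂ,
      (∏ j, f j) = (∏ i : Fin m, ∏ β : Bool, f (Sum.inl (i, β))) * f (Sum.inr ()) := by
    intro f
    rw [Fintype.prod_sum_type, Fintype.prod_prod_type]
    congr 1
    simp
  -- key per-pair dot product computations
  have keyId : ∀ (s s' : Fin m → Bool) (i : Fin m),
      (∏ β : Bool, star (gp s (i, β)) ⬝ᵥ gp s' (i, β)) = if s i = s' i then (1:ℂ) else 0 := by
    intro s s' i
    rw [Fintype.prod_bool]
    simp only [hgp]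
    cases hsi : s i <;> cases hsi' : s' i <;>
      simp [hsi, hsi', nvl, nu, olu, oul]
  have keyRho : ∀ (s s' : Fin m → Bool) (i : Fin m),
      (∏ β : Bool, star (gp s (i, β)) ⬝ᵥ ρ.mulVec (gp s' (i, β)))
        = if s i = s' i then rll * ruu else tc := by
    intro s s' i
    rw [Fintype.prod_bool]
    simp only [hgp]
    cases hsi : s i with
    | false => cases hsi' : s' i with
      | false =>
          norm_num
          rw [hrll, hruu]
          try ring
      | true =>
          norm_num
          rw [htc, hrlu, hrul]
          try ring
    | true => cases hsi' : s' i with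
      | false =>
          norm_num
          rw [htc, hrlu, hrul]
          try ring
      | true =>
          norm_num
          try rw [hrll, hruu]
          try ring
  -- bilinear expansion
  have bilin : ∀ (c1 c2 : (Fin m → Bool) → ℂ)
      (p q : (Fin m → Bool) → ((Fin m × Bool ⊕ Unit) → n) → ℂ)
      (M : Matrix ((Fin m × Bool ⊕ Unit) → n) ((Fin m × Bool ⊕ Unit) → n) ℂ),
      star (∑ s, c1 s • p s) ⬝ᵥ M.mulVec (∑ s, c2 s • q s)
        = ∑ s, ∑ s', star (c1 s) * c2 s' * (star (p s) ⬝ᵥ M.mulVec (q s')) := by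
    intro c1 c2 p q M
    rw [mulVec_sumVec, star_sum, sumVec_dotProduct]
    apply Finset.sum_congr rfl
    intro s _
    rw [dotProduct_sumVec]
    apply Finset.sum_congr rfl
    intro s' _
    rw [star_smul, smul_dotProduct, Matrix.mulVec_smul, dotProduct_smul]
    simp only [smul_eq_mul]
    ring
  have bilin0 : ∀ (c1 c2 : (Fin m → Bool) → ℂ)
      (p q : (Fin m → Bool) → ((Fin m × Bool ⊕ Unit) → n) → ℂ),
      star (∑ s, c1 s • p s) ⬝ᵥ (∑ s, c2 s • q s)
        = ∑ s, ∑ s', star (c1 s) * c2 s' * (star (p s) ⬝ᵥ q s') := by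
    intro c1 c2 p q
    rw [star_sum, sumVec_dotProduct]
    refine Finset.sum_congr rfl fun s _ => ?_
    rw [dotProduct_sumVec]
    refine Finset.sum_congr rfl fun s' _ => ?_
    rw [star_smul, smul_dotProduct, dotProduct_smul]
    simp only [smul_eq_mul]
    ring
  set cA : (Fin m → Bool) → ℂ := fun _ => 1 with hcA
  set va : ((Fin m × Bool ⊕ Unit) → n) → ℂ := ∑ s, cA s • pvec (g v1 s) with hva
  set vb : ((Fin m × Bool ⊕ Unit) → n) → ℂ := ∑ s, sgnv s • pvec (g v0 s) with hvb
  have dotPPid : ∀ (w1 w2 : n → ℂ) (s s' : Fin m → Bool),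
      star (pvec (g w1 s)) ⬝ᵥ pvec (g w2 s')
        = (∏ i : Fin m, ∏ β : Bool, star (gp s (i, β)) ⬝ᵥ gp s' (i, β)) * (star w1 ⬝ᵥ w2) := by
    intro w1 w2 s s'
    rw [dot_pvec, pairSplit (fun j => star (g w1 s j) ⬝ᵥ g w2 s' j)]
    rfl
  have dotPPrho : ∀ (w1 w2 : n → ℂ) (s s' : Fin m → Bool),
      star (pvec (g w1 s)) ⬝ᵥ (tensorState ρ (Fin m × Bool ⊕ Unit)).mulVec (pvec (g w2 s'))
        = (∏ i : Fin m, ∏ β : Bool, star (gp s (i, β)) ⬝ᵥ ρ.mulVec (gp s' (i, β)))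
            * (star w1 ⬝ᵥ ρ.mulVec w2) := by
    intro w1 w2 s s'
    rw [tensorState_mulVec, dot_pvec,
      pairSplit (fun j => star (g w1 s j) ⬝ᵥ ρ.mulVec (g w2 s' j))]
    rfl
  have haa : star va ⬝ᵥ va = 2 ^ m := by
    rw [hva, bilin0]
    have term : ∀ s s' : Fin m → Bool,
        star (cA s) * cA s' * (star (pvec (g v1 s)) ⬝ᵥ pvec (g v1 s'))
          = ∏ i, (if s i = s' i then (1:ℂ) else 0) := by
      intro s s'
      rw [dotPPid, nv1, mul_one, Finset.prod_congr rfl (fun i _ => keyId s s' i)]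
      simp [hcA]
    rw [Finset.sum_congr rfl fun s _ => Finset.sum_congr rfl fun s' _ => term s s',
      sum_sum_prod_if m 1 0]
    norm_num
  have hbb : star vb ⬝ᵥ vb = 2 ^ m := by
    rw [hvb, bilin0]
    have term : ∀ s s' : Fin m → Bool,
        star (sgnv s) * sgnv s' * (star (pvec (g v0 s)) ⬝ᵥ pvec (g v0 s'))
          = sgnv s * sgnv s' * ∏ i, (if s i = s' i then (1:ℂ) else 0) := by
      intro s s'
      rw [dotPPid, nv0, mul_one, sgnv_star, Finset.prod_congr rfl (fun i _ => keyId s s' i)]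
    rw [Finset.sum_congr rfl fun s _ => Finset.sum_congr rfl fun s' _ => term s s',
      sum_sum_prod_if_sgn m 1 0]
    norm_num
  have hab : star va ⬝ᵥ vb = 0 := by
    rw [hva, hvb, bilin0]
    apply Finset.sum_eq_zero; intro s _
    apply Finset.sum_eq_zero; intro s' _
    rw [dotPPid, o10]
    ring
  have hba : star vb ⬝ᵥ va = 0 := by
    rw [← star_dot_swap, hab, star_zero]
  have hqa : star va ⬝ᵥ (tensorState ρ (Fin m × Bool ⊕ Unit)).mulVec va
      = 2 ^ m * ((rll * ruu + tc) ^ m * q1) := by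
    rw [hva, bilin]
    have term : ∀ s s' : Fin m → Bool,
        star (cA s) * cA s' *
          (star (pvec (g v1 s)) ⬝ᵥ (tensorState ρ (Fin m × Bool ⊕ Unit)).mulVec (pvec (g v1 s')))
          = (∏ i, (if s i = s' i then rll * ruu else tc)) * q1 := by
      intro s s'
      rw [dotPPrho, Finset.prod_congr rfl (fun i _ => keyRho s s' i)]
      simp [hcA, ← hq1]
    rw [Finset.sum_congr rfl fun s _ => Finset.sum_congr rfl fun s' _ => term s s']
    have pull : ∀ s : Fin m → Bool,
        (∑ s' : Fin m → Bool, (∏ i, (if s i = s' i then rll * ruu else tc)) * q1)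
          = (∑ s' : Fin m → Bool, ∏ i, (if s i = s' i then rll * ruu else tc)) * q1 :=
      fun s => (Finset.sum_mul _ _ _).symm
    rw [Finset.sum_congr rfl fun s _ => pull s, ← Finset.sum_mul, sum_sum_prod_if m (rll*ruu) tc]
    ring
  have hqb : star vb ⬝ᵥ (tensorState ρ (Fin m × Bool ⊕ Unit)).mulVec vb
      = 2 ^ m * ((rll * ruu - tc) ^ m * q0) := by
    rw [hvb, bilin]
    have term : ∀ s s' : Fin m → Bool,
        star (sgnv s) * sgnv s' *
          (star (pvec (g v0 s)) ⬝ᵥ (tensorState ρ (Fin m × Bool ⊕ Unit)).mulVec (pvec (g v0 s')))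
          = (sgnv s * sgnv s' * ∏ i, (if s i = s' i then rll * ruu else tc)) * q0 := by
      intro s s'
      rw [dotPPrho, Finset.prod_congr rfl (fun i _ => keyRho s s' i), sgnv_star, ← hq0]
      ring
    rw [Finset.sum_congr rfl fun s _ => Finset.sum_congr rfl fun s' _ => term s s']
    have pull : ∀ s : Fin m → Bool,
        (∑ s' : Fin m → Bool, (sgnv s * sgnv s' * ∏ i, (if s i = s' i then rll * ruu else tc)) * q0)
          = (∑ s' : Fin m → Bool, sgnv s * sgnv s' * ∏ i, (if s i = s' i then rll * ruu else tc)) * q0 :=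
      fun s => (Finset.sum_mul _ _ _).symm
    rw [Finset.sum_congr rfl fun s _ => pull s, ← Finset.sum_mul,
      sum_sum_prod_if_sgn m (rll*ruu) tc]
    ring
  -- eigenvector equations
  set μa : ℝ := m * (El + Eu) + E1 with hμa
  set μb : ℝ := m * (El + Eu) + E0 with hμb
  set K := extOp H (Fin m × Bool ⊕ Unit) with hKdef
  have hKH : K.IsHermitian := extOp_isHermitian hH
  have eigP : ∀ (w : n → ℂ) (Ew : ℝ), H.mulVec w = (Ew:ℂ) • w → ∀ s : Fin m → Bool,
      K.mulVec (pvec (g w s)) = ((m * (El + Eu) + Ew : ℝ) : ℂ) • pvec (g w s) := by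
    intro w Ew hw s
    rw [hKdef]
    have hc : ∀ j, H.mulVec (g w s j)
        = ((Sum.elim (fun p : Fin m × Bool => if s p.1 = p.2 then El else Eu)
            (fun _ : Unit => Ew) j : ℝ) : ℂ) • g w s j := by
      rintro (⟨i, β⟩ | x)
      · simp only [hg, Sum.elim_inl, hgp]
        by_cases hb : s i = β
        · simp [hb, hvl]
        · simp [hb, hu]
      · simpa [hg] using hw
    rw [extOp_mulVec_pvec H (g w s) _ hc]
    congr 2
    rw [Fintype.sum_sum_type, Fintype.sum_prod_type]
    have hpair : ∀ i : Fin m,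
        (∑ β : Bool, Sum.elim (fun p : Fin m × Bool => if s p.1 = p.2 then El else Eu)
          (fun _ : Unit => Ew) (Sum.inl (i, β))) = El + Eu := by
      intro i
      simp only [Sum.elim_inl]
      rw [Fintype.sum_bool]
      cases hsi : s i <;> simp [hsi] <;> ring
    rw [Finset.sum_congr rfl fun i _ => hpair i, Finset.sum_const, Finset.card_univ,
      Fintype.card_fin, nsmul_eq_mul]
    simp
  have hKva : K.mulVec va = ((μa : ℝ) : ℂ) • va := by
    rw [hva, mulVec_sumVec]
    have step : ∀ s : Fin m → Bool, K.mulVec (cA s • pvec (g v1 s))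
        = ((μa : ℝ) : ℂ) • (cA s • pvec (g v1 s)) := by
      intro s
      rw [Matrix.mulVec_smul, eigP v1 E1 hv1 s, hμa, smul_comm]
    rw [Finset.sum_congr rfl fun s _ => step s, ← Finset.smul_sum]
  have hKvb : K.mulVec vb = ((μb : ℝ) : ℂ) • vb := by
    rw [hvb, mulVec_sumVec]
    have step : ∀ s : Fin m → Bool, K.mulVec (sgnv s • pvec (g v0 s))
        = ((μb : ℝ) : ℂ) • (sgnv s • pvec (g v0 s)) := by
      intro s
      rw [Matrix.mulVec_smul, eigP v0 E0 hv0 s, hμb, smul_comm]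
    rw [Finset.sum_congr rfl fun s _ => step s, ← Finset.smul_sum]
  clear_value va vb K
  -- the matrices
  set κ2 : ℂ := ((((2:ℝ)⁻¹) ^ m : ℝ) : ℂ) with hκ2
  have hκ : κ2 * 2 ^ m = 1 := by
    rw [hκ2]
    push_cast
    rw [← mul_pow]
    norm_num
  have hκstar : star κ2 = κ2 := by
    rw [hκ2, Complex.star_def, Complex.conj_ofReal]
  set A := κ2 • vecMulVec va (star va) with hA
  set B := κ2 • vecMulVec vb (star vb) with hB
  set X := κ2 • vecMulVec va (star vb) with hX
  set Y := κ2 • vecMulVec vb (star va) with hY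
  clear_value A B X Y
  have hmul : ∀ (x y z w : ((Fin m × Bool ⊕ Unit) → n) → ℂ),
      (κ2 • vecMulVec x (star y)) * (κ2 • vecMulVec z (star w))
        = (κ2 * (κ2 * (star y ⬝ᵥ z))) • vecMulVec x (star w) := by
    intro x y z w
    rw [Matrix.smul_mul, Matrix.mul_smul, vecMulVec_mul_vecMulVec, smul_smul, smul_smul,
      mul_assoc]
  have pAA : A * A = A := by rw [hA, hmul, haa, hκ, mul_one]
  have pAB : A * B = 0 := by rw [hA, hB, hmul, hab, mul_zero, mul_zero, zero_smul]
  have pAX : A * X = X := by rw [hA, hX, hmul, haa, hκ, mul_one]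
  have pAY : A * Y = 0 := by rw [hA, hY, hmul, hab, mul_zero, mul_zero, zero_smul]
  have pBA : B * A = 0 := by rw [hA, hB, hmul, hba, mul_zero, mul_zero, zero_smul]
  have pBB : B * B = B := by rw [hB, hmul, hbb, hκ, mul_one]
  have pBX : B * X = 0 := by rw [hB, hX, hmul, hba, mul_zero, mul_zero, zero_smul]
  have pBY : B * Y = Y := by rw [hB, hY, hmul, hbb, hκ, mul_one]
  have pXA : X * A = 0 := by rw [hA, hX, hmul, hba, mul_zero, mul_zero, zero_smul]
  have pXB : X * B = X := by rw [hX, hB, hmul, hbb, hκ, mul_one]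
  have pXX : X * X = 0 := by rw [hX, hmul, hba, mul_zero, mul_zero, zero_smul]
  have pXY : X * Y = A := by rw [hX, hY, hA, hmul, hbb, hκ, mul_one]
  have pYA : Y * A = Y := by rw [hY, hA, hmul, haa, hκ, mul_one]
  have pYB : Y * B = 0 := by rw [hY, hB, hmul, hab, mul_zero, mul_zero, zero_smul]
  have pYX : Y * X = B := by rw [hY, hX, hB, hmul, haa, hκ, mul_one]
  have pYY : Y * Y = 0 := by rw [hY, hmul, hab, mul_zero, mul_zero, zero_smul]
  have hstarμ : ∀ r : ℝ, star ((r : ℝ) : ℂ) = ((r : ℝ) : ℂ) := fun r => by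
    rw [Complex.star_def, Complex.conj_ofReal]
  have hKA : K * A = ((μa : ℝ) : ℂ) • A := by
    rw [hA, Matrix.mul_smul, mul_vecMulVec, hKva, smul_vecMulVec, smul_comm]
  have hKB : K * B = ((μb : ℝ) : ℂ) • B := by
    rw [hB, Matrix.mul_smul, mul_vecMulVec, hKvb, smul_vecMulVec, smul_comm]
  have hKX : K * X = ((μa : ℝ) : ℂ) • X := by
    rw [hX, Matrix.mul_smul, mul_vecMulVec, hKva, smul_vecMulVec, smul_comm]
  have hKY : K * Y = ((μb : ℝ) : ℂ) • Y := by
    rw [hY, Matrix.mul_smul, mul_vecMulVec, hKvb, smul_vecMulVec, smul_comm]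
  have hvecA : Matrix.vecMul (star va) K = ((μa : ℝ) : ℂ) • star va := by
    rw [show Matrix.vecMul (star va) K = star (K.mulVec va) from by
      rw [Matrix.star_mulVec, hKH.eq], hKva, star_smul, hstarμ]
  have hvecB : Matrix.vecMul (star vb) K = ((μb : ℝ) : ℂ) • star vb := by
    rw [show Matrix.vecMul (star vb) K = star (K.mulVec vb) from by
      rw [Matrix.star_mulVec, hKH.eq], hKvb, star_smul, hstarμ]
  have hAK : A * K = ((μa : ℝ) : ℂ) • A := by
    rw [hA, Matrix.smul_mul, vecMulVec_mul, hvecA, vecMulVec_smul, smul_comm]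
  have hBK : B * K = ((μb : ℝ) : ℂ) • B := by
    rw [hB, Matrix.smul_mul, vecMulVec_mul, hvecB, vecMulVec_smul, smul_comm]
  have hXK : X * K = ((μb : ℝ) : ℂ) • X := by
    rw [hX, Matrix.smul_mul, vecMulVec_mul, hvecB, vecMulVec_smul, smul_comm]
  have hYK : Y * K = ((μa : ℝ) : ℂ) • Y := by
    rw [hY, Matrix.smul_mul, vecMulVec_mul, hvecA, vecMulVec_smul, smul_comm]
  set U : Matrix ((Fin m × Bool ⊕ Unit) → n) ((Fin m × Bool ⊕ Unit) → n) ℂ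
    := 1 - A - B + X + Y with hU
  clear_value U
  have hUherm : Uᴴ = U := by
    rw [hU, hA, hB, hX, hY]
    simp only [Matrix.conjTranspose_add, Matrix.conjTranspose_sub, Matrix.conjTranspose_one,
      Matrix.conjTranspose_smul, conjTranspose_vecMulVec, hκstar]
    abel
  have hUU : U * U = 1 := by
    rw [hU]
    simp only [mul_sub, sub_mul, mul_add, add_mul, mul_one, one_mul,
      pAA, pAB, pAX, pAY, pBA, pBB, pBX, pBY, pXA, pXB, pXX, pXY, pYA, pYB, pYX, pYY,
      sub_zero, add_zero, zero_add, zero_sub, sub_self]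
    abel
  have hUmem : U ∈ Matrix.unitaryGroup ((Fin m × Bool ⊕ Unit) → n) ℂ := by
    rw [Matrix.mem_unitaryGroup_iff, Matrix.star_eq_conjTranspose, hUherm, hUU]
  set c1 : ℂ := ((μa : ℝ) : ℂ) with hc1
  set c2 : ℂ := ((μb : ℝ) : ℂ) with hc2
  clear_value c1 c2
  have hKU : K * U = K - c1 • A - c2 • B + c1 • X + c2 • Y := by
    rw [hU, mul_add, mul_add, mul_sub, mul_sub, mul_one, hKA, hKB, hKX, hKY]
  have hAKU : A * (K * U) = c1 • X := by
    rw [hKU, mul_add, mul_add, mul_sub, mul_sub, Matrix.mul_smul, Matrix.mul_smul,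
      Matrix.mul_smul, Matrix.mul_smul, hAK, pAA, pAB, pAX, pAY]
    simp only [smul_zero]
    abel
  have hBKU : B * (K * U) = c2 • Y := by
    rw [hKU, mul_add, mul_add, mul_sub, mul_sub, Matrix.mul_smul, Matrix.mul_smul,
      Matrix.mul_smul, Matrix.mul_smul, hBK, pBA, pBB, pBX, pBY]
    simp only [smul_zero]
    abel
  have hXKU : X * (K * U) = c2 • A := by
    rw [hKU, mul_add, mul_add, mul_sub, mul_sub, Matrix.mul_smul, Matrix.mul_smul,
      Matrix.mul_smul, Matrix.mul_smul, hXK, pXA, pXB, pXX, pXY]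
    simp only [smul_zero]
    abel
  have hYKU : Y * (K * U) = c1 • B := by
    rw [hKU, mul_add, mul_add, mul_sub, mul_sub, Matrix.mul_smul, Matrix.mul_smul,
      Matrix.mul_smul, Matrix.mul_smul, hYK, pYA, pYB, pYX, pYY]
    simp only [smul_zero]
    abel
  have expand : ∀ Z : Matrix ((Fin m × Bool ⊕ Unit) → n) ((Fin m × Bool ⊕ Unit) → n) ℂ,
      U * Z = Z - A * Z - B * Z + X * Z + Y * Z := by
    intro Z
    rw [hU, add_mul, add_mul, sub_mul, sub_mul, one_mul]
  have hUKU : Uᴴ * K * U = K + (c2 - c1) • A + (c1 - c2) • B := by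
    calc Uᴴ * K * U = U * (K * U) := by rw [hUherm, mul_assoc]
      _ = (K * U) - A * (K * U) - B * (K * U) + X * (K * U) + Y * (K * U) := expand _
      _ = (K - c1 • A - c2 • B + c1 • X + c2 • Y) - c1 • X - c2 • Y + c2 • A + c1 • B := by
          rw [hAKU, hBKU, hXKU, hYKU, hKU]
      _ = K + (c2 - c1) • A + (c1 - c2) • B := by rw [sub_smul, sub_smul]; abel
  have hcomm : Commute (Uᴴ * K * U) K := by
    unfold Commute SemiconjBy
    rw [hUKU]
    simp only [add_mul, mul_add, Matrix.smul_mul, Matrix.mul_smul,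
      hKA, hAK, hKB, hBK, smul_smul]
    try rw [mul_comm c1 (c2 - c1)]
    try rw [mul_comm c2 (c1 - c2)]
  refine ⟨U, hUmem, hcomm, ?_⟩
  set T := tensorState ρ (Fin m × Bool ⊕ Unit) with hT
  have trA : (T * A).trace = (rll * ruu + tc) ^ m * q1 := by
    rw [hA, Matrix.mul_smul, Matrix.trace_smul, trace_mul_vecMulVec, hqa, smul_eq_mul,
      ← mul_assoc, hκ, one_mul]
  have trB : (T * B).trace = (rll * ruu - tc) ^ m * q0 := by
    rw [hB, Matrix.mul_smul, Matrix.trace_smul, trace_mul_vecMulVec, hqb, smul_eq_mul,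
      ← mul_assoc, hκ, one_mul]
  rw [hUKU]
  have hsplit : K - (K + (c2 - c1) • A + (c1 - c2) • B)
      = (c1 - c2) • A - (c1 - c2) • B := by
    rw [sub_smul, sub_smul, sub_smul]
    abel
  rw [hsplit, Matrix.mul_sub, Matrix.mul_smul, Matrix.mul_smul, Matrix.trace_sub,
    Matrix.trace_smul, Matrix.trace_smul, trA, trB]
  have hμab : μa - μb = E1 - E0 := by rw [hμa, hμb]; ring
  have hcast : c1 - c2 = ((E1 - E0 : ℝ) : ℂ) := by
    rw [hc1, hc2, ← hμab]
    push_cast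
    ring
  rw [hcast]
  simp only [smul_eq_mul]
  ring

end Work
namespace Work
variable {n : Type*} [Fintype n] [DecidableEq n]

lemma dot_self_of_norm (v : n → ℂ) (hv : ∑ x, ‖v x‖ ^ 2 = 1) : star v ⬝ᵥ v = 1 := by
  unfold dotProduct
  have key : ∀ x, (star v) x * v x = ((‖v x‖ ^ 2 : ℝ) : ℂ) := by
    intro x
    rw [Pi.star_apply, Complex.star_def, mul_comm, Complex.mul_conj, ← Complex.sq_norm]
  rw [Finset.sum_congr rfl fun x _ => key x, ← Complex.ofReal_sum, hv, Complex.ofReal_one]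

lemma ne_zero_of_dot_one (v : n → ℂ) (h : star v ⬝ᵥ v = 1) : v ≠ 0 := by
  intro h0
  rw [h0] at h
  simp at h

end Work

open Work

/-- if `H` has eigenstates with distinct eigenvalues `E₀ < E₁`, and the
positive definite density operator `ρ` fails to commute with the projection onto some
eigenstate `|E_l⟩` of `H`, then positive work can be extracted from some number `N` of
copies of `ρ` by a unitary `U` with `[U†H^{(N)}U, H^{(N)}] = 0`. -/
theorem positive_work_of_coherence {n : Type*} [Fintype n] [DecidableEq n]
    (H : Matrix n n ℂ) (hH : H.IsHermitian)
    (ρ : Matrix n n ℂ) (hρ : ρ.PosDef) (hρtr : ρ.trace = 1)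
    (E₀ E₁ : ℝ) (v₀ v₁ : n → ℂ)
    (hv₀ : H.mulVec v₀ = (E₀ : ℂ) • v₀) (hv₁ : H.mulVec v₁ = (E₁ : ℂ) • v₁)
    (hv₀n : ∑ x, ‖v₀ x‖ ^ 2 = 1) (hv₁n : ∑ x, ‖v₁ x‖ ^ 2 = 1)
    (hE : E₀ < E₁)
    (El : ℝ) (vl : n → ℂ) (hvl : H.mulVec vl = (El : ℂ) • vl)
    (hvln : ∑ x, ‖vl x‖ ^ 2 = 1)
    (hcoh : ρ * Matrix.vecMulVec vl (star vl) ≠ Matrix.vecMulVec vl (star vl) * ρ) :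
    ∃ (N : ℕ) (U : Matrix (Fin N → n) (Fin N → n) ℂ),
      U ∈ Matrix.unitaryGroup (Fin N → n) ℂ ∧
      Commute (Uᴴ * extOp H (Fin N) * U) (extOp H (Fin N)) ∧
      0 < ((tensorState ρ (Fin N) * (extOp H (Fin N) - Uᴴ * extOp H (Fin N) * U)).trace).re := by
  classical
  have hρH : ρ.IsHermitian := hρ.1
  have hvl1 : star vl ⬝ᵥ vl = 1 := dot_self_of_norm vl hvln
  have hv01 : star v₀ ⬝ᵥ v₀ = 1 := dot_self_of_norm v₀ hv₀n
  have hv11 : star v₁ ⬝ᵥ v₁ = 1 := dot_self_of_norm v₁ hv₁n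
  set α := star vl ⬝ᵥ ρ.mulVec vl with hαdef
  have hαre : α = ((α.re : ℝ) : ℂ) := herm_quad_real hρH vl
  have hαstar : star α = α := by rw [hαre, Complex.star_def, Complex.conj_ofReal]
  set ψ : n → ℂ := ρ.mulVec vl - α • vl with hψdef
  have hψne : ψ ≠ 0 := by
    intro h0
    apply hcoh
    have hρvl : ρ.mulVec vl = α • vl := by
      have := h0
      rw [hψdef, sub_eq_zero] at this
      exact this
    rw [Work.mul_vecMulVec, Work.vecMulVec_mul, hρvl, Work.smul_vecMulVec]
    have hvm : Matrix.vecMul (star vl) ρ = star α • star vl := by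
      rw [show Matrix.vecMul (star vl) ρ = star (ρ.mulVec vl) from by
        rw [Matrix.star_mulVec, hρH.eq], hρvl, star_smul]
    rw [hvm, Work.vecMulVec_smul, hαstar]
  have hvlψ : star vl ⬝ᵥ ψ = 0 := by
    rw [hψdef, dotProduct_sub, dotProduct_smul, hvl1, ← hαdef]
    simp
  -- eigenvector basis machinery
  set w : n → n → ℂ := fun j => (WithLp.equiv 2 ((i : n) → ℂ)) (hH.eigenvectorBasis j) with hw
  have hweig : ∀ j, H.mulVec (w j) = ((hH.eigenvalues j : ℝ) : ℂ) • w j := by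
    intro j
    rw [hw]
    simp only [WithLp.equiv_apply]
    rw [hH.mulVec_eigenvectorBasis]
    funext x
    simp [Complex.real_smul]
  have hwdot : ∀ j k, star (w j) ⬝ᵥ w k = if j = k then 1 else 0 := by
    intro j k
    have h := hH.eigenvectorBasis.orthonormal
    rw [orthonormal_iff_ite] at h
    rw [← h j k]
    simp only [PiLp.inner_apply, dotProduct, RCLike.inner_apply, hw, Pi.star_apply]
    simp only [WithLp.equiv_apply]
    exact Finset.sum_congr rfl fun _ _ => mul_comm _ _
  have hrepr : ∀ x : n → ℂ, ∑ j, (star (w j) ⬝ᵥ x) • w j = x := by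
    intro x
    set W : Matrix n n ℂ := Matrix.of fun i j => w j i with hW
    have hWHW : Wᴴ * W = 1 := by
      ext j k
      rw [Matrix.mul_apply, Matrix.one_apply]
      rw [← hwdot j k]
      unfold dotProduct
      apply Finset.sum_congr rfl
      intro i _
      rw [Matrix.conjTranspose_apply, hW]
      simp
    have hWWH : W * Wᴴ = 1 := mul_eq_one_comm.mp hWHW
    funext i
    have entry : ∀ k, (∑ j, w j i * star (w j k)) = if i = k then 1 else 0 := by
      intro k
      have := congrFun (congrFun hWWH i) k
      rw [Matrix.mul_apply, Matrix.one_apply] at this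
      rw [← this]
      apply Finset.sum_congr rfl
      intro j _
      rw [Matrix.conjTranspose_apply, hW]
      simp
    calc (∑ j, (star (w j) ⬝ᵥ x) • w j) i = ∑ j, ∑ k, star (w j k) * x k * w j i := by
          rw [Finset.sum_apply]
          apply Finset.sum_congr rfl
          intro j _
          rw [Pi.smul_apply, smul_eq_mul]
          unfold dotProduct
          rw [Finset.sum_mul]
          apply Finset.sum_congr rfl
          intro k _
          simp
      _ = ∑ k, (∑ j, w j i * star (w j k)) * x k := by
          rw [Finset.sum_comm]
          apply Finset.sum_congr rfl
          intro k _
          rw [Finset.sum_mul]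
          apply Finset.sum_congr rfl
          intro j _
          ring
      _ = x i := by
          rw [Finset.sum_congr rfl fun k _ => by rw [entry k]]
          simp [Finset.sum_ite_eq' Finset.univ i x]
  set c : n → ℂ := fun j => star (w j) ⬝ᵥ ψ with hc
  obtain ⟨j0, hj0⟩ : ∃ j, c j ≠ 0 := by
    by_contra hall
    push_neg at hall
    apply hψne
    have := hrepr ψ
    rw [Finset.sum_congr rfl fun j _ => by rw [show star (w j) ⬝ᵥ ψ = c j from rfl, hall j, zero_smul]] at this
    simpa using this.symm
  set E := hH.eigenvalues j0 with hE0
  set u' : n → ℂ := ∑ k, (if hH.eigenvalues k = E then c k else 0) • w k with hu'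
  have hu'eig : H.mulVec u' = (E : ℂ) • u' := by
    rw [hu', mulVec_sumVec, Finset.smul_sum]
    apply Finset.sum_congr rfl
    intro k _
    rw [Matrix.mulVec_smul, hweig k]
    by_cases h : hH.eigenvalues k = E
    · rw [if_pos h, h, smul_comm]
    · rw [if_neg h]
      simp
  have hu'c : ∀ x : n → ℂ, star u' ⬝ᵥ x
      = ∑ k, (if hH.eigenvalues k = E then star (c k) else 0) * (star (w k) ⬝ᵥ x) := by
    intro x
    rw [hu', star_sum, sumVec_dotProduct]
    apply Finset.sum_congr rfl
    intro k _
    rw [star_smul, smul_dotProduct]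
    split <;> simp
  set Sr : ℝ := ∑ k, (if hH.eigenvalues k = E then Complex.normSq (c k) else 0) with hSrdef
  have hSrpos : 0 < Sr := by
    rw [hSrdef]
    apply Finset.sum_pos'
    · intro k _
      split
      · exact (Complex.normSq_nonneg _)
      · exact le_refl 0
    · refine ⟨j0, Finset.mem_univ j0, ?_⟩
      rw [if_pos rfl]
      exact Complex.normSq_pos.mpr hj0
  have hstarc : ∀ k, star (c k) * c k = ((Complex.normSq (c k) : ℝ) : ℂ) := by
    intro k
    rw [Complex.star_def, mul_comm, Complex.mul_conj]
  have hu'ψ : star u' ⬝ᵥ ψ = ((Sr : ℝ) : ℂ) := by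
    rw [hu'c ψ, hSrdef, Complex.ofReal_sum]
    apply Finset.sum_congr rfl
    intro k _
    split
    · rw [← hstarc k]
      try rfl
    · simp
  have hin : ∀ k, star (w k) ⬝ᵥ u' = (if hH.eigenvalues k = E then c k else 0) := by
    intro k
    rw [hu', dotProduct_sumVec]
    rw [Finset.sum_congr rfl fun k' _ => by
      rw [dotProduct_smul, hwdot k k', smul_eq_mul, mul_ite, mul_one, mul_zero]]
    rw [Finset.sum_ite_eq Finset.univ k (fun k' => if hH.eigenvalues k' = E then c k' else 0)]
    simp
  have hu'u' : star u' ⬝ᵥ u' = ((Sr : ℝ) : ℂ) := by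
    rw [hu'c u', hSrdef, Complex.ofReal_sum]
    apply Finset.sum_congr rfl
    intro k _
    rw [hin k]
    split
    · rw [← hstarc k]
    · simp
  have hvlw : ∀ k, hH.eigenvalues k ≠ El → star vl ⬝ᵥ w k = 0 := by
    intro k hk
    exact eig_orth hH hvl (hweig k) (fun h => hk h.symm)
  have hvlu' : star vl ⬝ᵥ u' = 0 := by
    rw [hu', dotProduct_sumVec]
    by_cases hEl : E = El
    · have step : ∀ k, star vl ⬝ᵥ ((if hH.eigenvalues k = E then c k else 0) • w k)
          = c k * (star vl ⬝ᵥ w k) := by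
        intro k
        rw [dotProduct_smul, smul_eq_mul]
        by_cases h : hH.eigenvalues k = E
        · rw [if_pos h]
        · rw [if_neg h, zero_mul, hvlw k (fun hh => h (by rw [hh, hEl])), mul_zero]
      rw [Finset.sum_congr rfl fun k _ => step k]
      have expand : ∑ k, c k * (star vl ⬝ᵥ w k) = star vl ⬝ᵥ ψ := by
        conv_rhs => rw [← hrepr ψ]
        rw [dotProduct_sumVec]
        apply Finset.sum_congr rfl
        intro k _
        rw [dotProduct_smul, smul_eq_mul]
        try rw [show star (w k) ⬝ᵥ ψ = c k from rfl]
        try ring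
      rw [expand, hvlψ]
    · apply Finset.sum_eq_zero
      intro k _
      rw [dotProduct_smul, smul_eq_mul]
      by_cases h : hH.eigenvalues k = E
      · rw [hvlw k (by rw [h]; exact hEl), mul_zero]
      · rw [if_neg h, zero_mul]
  -- normalized second eigenvector
  set u : n → ℂ := (((Real.sqrt Sr)⁻¹ : ℝ) : ℂ) • u' with hu
  have hrstar : ∀ r : ℝ, star ((r : ℝ) : ℂ) = ((r : ℝ) : ℂ) := fun r => by
    rw [Complex.star_def, Complex.conj_ofReal]
  have hueig : H.mulVec u = (E : ℂ) • u := by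
    rw [hu, Matrix.mulVec_smul, hu'eig, smul_comm]
  have hu1 : star u ⬝ᵥ u = 1 := by
    rw [hu, star_smul, smul_dotProduct, dotProduct_smul, hu'u', hrstar]
    simp only [smul_eq_mul]
    have hre : ((Real.sqrt Sr)⁻¹ : ℝ) * (((Real.sqrt Sr)⁻¹ : ℝ) * Sr) = 1 := by
      rw [← Real.mul_self_sqrt hSrpos.le]
      have hs := ne_of_gt (Real.sqrt_pos.mpr hSrpos)
      field_simp
      rw [Real.sqrt_sq (Real.sqrt_nonneg _)]
    calc (((Real.sqrt Sr)⁻¹ : ℝ) : ℂ) * ((((Real.sqrt Sr)⁻¹ : ℝ) : ℂ) * ((Sr : ℝ) : ℂ))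
        = (((Real.sqrt Sr)⁻¹ * ((Real.sqrt Sr)⁻¹ * Sr) : ℝ) : ℂ) := by push_cast; ring
      _ = 1 := by rw [hre]; norm_num
  have hvlu : star vl ⬝ᵥ u = 0 := by
    rw [hu, dotProduct_smul, hvlu', smul_zero]
  have hurul : star u ⬝ᵥ ρ.mulVec vl = ((Real.sqrt Sr : ℝ) : ℂ) := by
    have hu'rvl : star u' ⬝ᵥ ρ.mulVec vl = ((Sr : ℝ) : ℂ) := by
      have hsplit : ρ.mulVec vl = ψ + α • vl := by rw [hψdef]; abel
      have hu'vl : star u' ⬝ᵥ vl = 0 := by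
        rw [← star_dot_swap, hvlu', star_zero]
      rw [hsplit, dotProduct_add, dotProduct_smul, hu'ψ, hu'vl]
      simp
    rw [hu, star_smul, smul_dotProduct, hu'rvl, hrstar]
    simp only [smul_eq_mul]
    rw [← Complex.ofReal_mul]
    congr 1
    rw [inv_mul_eq_div, div_eq_iff (ne_of_gt (Real.sqrt_pos.mpr hSrpos)),
      Real.mul_self_sqrt hSrpos.le]
  have hune : u ≠ 0 := ne_zero_of_dot_one u hu1
  have hvlne : vl ≠ 0 := ne_zero_of_dot_one vl hvl1
  have hv0ne : v₀ ≠ 0 := ne_zero_of_dot_one v₀ hv01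
  have hv1ne : v₁ ≠ 0 := ne_zero_of_dot_one v₁ hv11
  -- real positive scalars
  set Rll : ℝ := (star vl ⬝ᵥ ρ.mulVec vl).re with hRlldef
  set Ruu : ℝ := (star u ⬝ᵥ ρ.mulVec u).re with hRuudef
  set Q0 : ℝ := (star v₀ ⬝ᵥ ρ.mulVec v₀).re with hQ0def
  set Q1 : ℝ := (star v₁ ⬝ᵥ ρ.mulVec v₁).re with hQ1def
  have posre : ∀ v : n → ℂ, v ≠ 0 → 0 < (star v ⬝ᵥ ρ.mulVec v).re := by
    intro v hv
    have := hρ.re_dotProduct_pos hv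
    rwa [RCLike.re_to_complex] at this
  have hRllpos : 0 < Rll := posre vl hvlne
  have hRuupos : 0 < Ruu := posre u hune
  have hQ0pos : 0 < Q0 := posre v₀ hv0ne
  have hQ1pos : 0 < Q1 := posre v₁ hv1ne
  have hRll : star vl ⬝ᵥ ρ.mulVec vl = ((Rll : ℝ) : ℂ) := herm_quad_real hρH vl
  have hRuu : star u ⬝ᵥ ρ.mulVec u = ((Ruu : ℝ) : ℂ) := herm_quad_real hρH u
  have hQ0 : star v₀ ⬝ᵥ ρ.mulVec v₀ = ((Q0 : ℝ) : ℂ) := herm_quad_real hρH v₀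
  have hQ1 : star v₁ ⬝ᵥ ρ.mulVec v₁ = ((Q1 : ℝ) : ℂ) := herm_quad_real hρH v₁
  -- choose the number of coherent pairs
  obtain ⟨m, hm⟩ : ∃ m : ℕ, (Rll * Ruu - Sr) ^ m * Q0 < (Rll * Ruu + Sr) ^ m * Q1 := by
    rcases le_or_gt (Rll * Ruu - Sr) 0 with hD | hD
    · refine ⟨1, ?_⟩
      rw [pow_one, pow_one]
      have h1 : (Rll * Ruu - Sr) * Q0 ≤ 0 := mul_nonpos_of_nonpos_of_nonneg hD hQ0pos.le
      have h2 : 0 < (Rll * Ruu + Sr) * Q1 := by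
        apply mul_pos _ hQ1pos
        nlinarith
      linarith
    · have hr : 1 < (Rll * Ruu + Sr) / (Rll * Ruu - Sr) := by
        rw [lt_div_iff₀ hD]
        linarith
      obtain ⟨m, hm⟩ := pow_unbounded_of_one_lt (Q0 / Q1) hr
      refine ⟨m, ?_⟩
      rw [div_pow, div_lt_div_iff₀ hQ1pos (pow_pos hD m)] at hm
      nlinarith [hm]
  -- run the construction
  have o10 : star v₁ ⬝ᵥ v₀ = 0 := eig_orth hH hv₁ hv₀ (ne_of_gt hE)
  obtain ⟨U, hU1, hU2, hU3⟩ := aux_work H ρ hH hρH El E E₀ E₁ vl u v₀ v₁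
    hvl hueig hv₀ hv₁ hvl1 hu1 hv01 hv11 hvlu o10 m
  refine ⟨Fintype.card (Fin m × Bool ⊕ Unit), ?_⟩
  have hval : (tensorState ρ (Fin m × Bool ⊕ Unit) *
      (extOp H (Fin m × Bool ⊕ Unit)
        - Uᴴ * extOp H (Fin m × Bool ⊕ Unit) * U)).trace
      = (((E₁ - E₀) * ((Rll * Ruu + Sr) ^ m * Q1 - (Rll * Ruu - Sr) ^ m * Q0) : ℝ) : ℂ) := by
    rw [hU3, hRll, hRuu, hQ0, hQ1, hurul, hrstar]
    rw [show (((Real.sqrt Sr : ℝ) : ℂ) * ((Real.sqrt Sr : ℝ) : ℂ)) = ((Sr : ℝ) : ℂ) from by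
      rw [← Complex.ofReal_mul, Real.mul_self_sqrt hSrpos.le]]
    push_cast
    ring
  have hpos : 0 < ((tensorState ρ (Fin m × Bool ⊕ Unit) *
      (extOp H (Fin m × Bool ⊕ Unit)
        - Uᴴ * extOp H (Fin m × Bool ⊕ Unit) * U)).trace).re := by
    rw [hval, Complex.ofReal_re]
    apply mul_pos (by linarith)
    linarith
  exact transport (Fintype.equivFin (Fin m × Bool ⊕ Unit)) H ρ U hU1 hU2 hpos
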